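/- arXiv:math/0309371 — 2 statements merged into one kernel-verified Lean document; each statement's English description precedes it below -/
import Mathlib

section
/- Assume condition (6) holds. Then the only normal elements of 𝔏_Λ are the scalar multiples of the identity: if A ∈ 𝔏_Λ satisfies A*A = AA*, then A = c·I for some c ∈ ℂ. -/
noncomputable section

/-- Auxiliary recursion for the weight function: `W(u, []) = 1` and, reading the word
`w = i_k ⋯ i_1` as the list `[i_k, …, i_1]`,
`W(u, i :: w) = λ_{i, w·u} · W(u, w)`, so that
`W(u, i_k⋯i_1) = λ_{i_1,u} · λ_{i_2, i_1 u} ⋯ λ_{i_k, i_{k-1}⋯i_1 u}`. -/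
def Waux {n : ℕ} (lam : Fin n → FreeMonoid (Fin n) → ℝ) (u : FreeMonoid (Fin n)) :
    List (Fin n) → ℝ
  | [] => 1
  | i :: w => lam i (FreeMonoid.ofList w * u) * Waux lam u w

/-- The weight function `W : F_n^+ × F_n^+ → ℝ` associated to the weights `λ_{i,w}`. -/
def Wfun {n : ℕ} (lam : Fin n → FreeMonoid (Fin n) → ℝ) (u w : FreeMonoid (Fin n)) : ℝ :=
  Waux lam u (FreeMonoid.toList w)

instance {n : ℕ} : DecidableEq (FreeMonoid (Fin n)) := Classical.decEq _

/-- `n`-variable Fock space `H_n = ℓ²(F_n^+)`. -/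
abbrev Hn (n : ℕ) : Type := lp (fun _ : FreeMonoid (Fin n) => ℂ) 2

/-- The standard orthonormal basis vector `ξ_w` of `H_n`. -/
def xi {n : ℕ} (w : FreeMonoid (Fin n)) : Hn n := lp.single 2 w 1

/-- The unital WOT-closed algebra generated by a tuple of bounded operators on `H_n`:
the closure, in the weak operator topology, of the unital subalgebra they generate. -/
def wotAlg {n : ℕ} (T : Fin n → (Hn n →L[ℂ] Hn n)) : Set (Hn n →L[ℂ] Hn n) :=
  (ContinuousLinearMapWOT.ofCLM : (Hn n →L[ℂ] Hn n) → ContinuousLinearMapWOT (RingHom.id ℂ) (Hn n) (Hn n)) ⁻¹'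
    (closure ((ContinuousLinearMapWOT.ofCLM : (Hn n →L[ℂ] Hn n) → ContinuousLinearMapWOT (RingHom.id ℂ) (Hn n) (Hn n)) ''
      (Algebra.adjoin ℂ (Set.range T) : Subalgebra ℂ (Hn n →L[ℂ] Hn n))))

/-!
Condition (6) says exactly that the right weighted shifts `R_i ξ_w = μ_i(w) ξ_{w i}`, with
`μ_i(w) = W(i,w) W(e,w)⁻¹`, are bounded. The identity `μ_i(w) λ_{j,wi} = λ_{j,w} μ_i(jw)` makes
every `R_i` commute with every `T_j`, hence with every element of the WOT-closed algebra `𝔏_Λ`.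
Each `T_j` maps into `ξ_eᗮ`, so every `A ∈ 𝔏_Λ` leaves `ξ_eᗮ` invariant and `ξ_e` is an
eigenvector of `A*`; when `A` is normal it is then an eigenvector of `A`. Since the right shifts
carry `ξ_e` to nonzero multiples of all basis vectors and commute with `A`, the operator `A` is
scalar on the whole basis.
-/

open Function

theorem Function.extend_pi_single {ι κ M : Type*} [Zero M] [DecidableEq ι] [DecidableEq κ]
    {σ : ι → κ} (hσ : Injective σ) (u : ι) (a : M) :
    extend σ (Pi.single u a) 0 = Pi.single (σ u) a := by
  funext v
  by_cases hv : ∃ w, σ w = v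
  · obtain ⟨w, rfl⟩ := hv
    simp only [hσ.extend_apply, Pi.single_apply, hσ.eq_iff]
  · rw [extend_apply' _ _ _ hv, Pi.single_eq_of_ne (fun h => hv ⟨u, h.symm⟩), Pi.zero_apply]

theorem FreeMonoid.of_mul_ne_one {α : Type*} (a : α) (w : FreeMonoid α) : of a * w ≠ 1 :=
  fun h => List.cons_ne_nil a w.toList (congrArg toList h)

namespace lp

open scoped ENNReal

variable {𝕜 E ι κ : Type*} [NormedField 𝕜] [NormedAddCommGroup E] [NormedSpace 𝕜 E]
  {p : ℝ≥0∞} {σ : ι → κ}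

theorem norm_extend_zero_rpow {r : ℝ} (hr : r ≠ 0) (f : ι → E) :
    (fun v => ‖extend σ f 0 v‖ ^ r) = extend σ (fun u => ‖f u‖ ^ r) 0 := by
  funext v
  rw [apply_extend (fun a : E => ‖a‖ ^ r)]
  congr 1
  funext v
  simp [Real.zero_rpow hr]

theorem _root_.Memℓp.extend_zero (hp : 0 < p.toReal) (hσ : Injective σ) {f : ι → E}
    (hf : Memℓp f p) : Memℓp (extend σ f 0) p := by
  rw [memℓp_gen_iff hp] at hf ⊢
  rwa [norm_extend_zero_rpow hp.ne', summable_extend_zero hσ]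

variable [Fact (1 ≤ p)]

def extendZeroₗᵢ (hp : p ≠ ⊤) (hσ : Injective σ) :
    lp (fun _ : ι => E) p →ₗᵢ[𝕜] lp (fun _ : κ => E) p where
  toFun f := ⟨extend σ f 0, (lp.memℓp f).extend_zero
    (ENNReal.toReal_pos (zero_lt_one.trans_le Fact.out).ne' hp) hσ⟩
  map_add' f g := by
    ext1
    show extend σ (⇑(f + g)) 0 = extend σ ⇑f 0 + extend σ ⇑g 0
    rw [coeFn_add, ← extend_add, add_zero]
  map_smul' c f := by
    ext1
    show extend σ (⇑(c • f)) 0 = c • extend σ ⇑f 0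
    rw [coeFn_smul, ← extend_smul, smul_zero]
  norm_map' f := by
    have hp' := ENNReal.toReal_pos (zero_lt_one.trans_le Fact.out).ne' hp
    show ‖(⟨extend σ f 0, _⟩ : lp (fun _ : κ => E) p)‖ = ‖f‖
    rw [norm_eq_tsum_rpow hp', norm_eq_tsum_rpow hp']
    dsimp only
    rw [norm_extend_zero_rpow hp'.ne', tsum_extend_zero hσ]

theorem extendZeroₗᵢ_single [DecidableEq ι] [DecidableEq κ] (hp : p ≠ ⊤) (hσ : Injective σ)
    (u : ι) (a : E) :
    extendZeroₗᵢ (𝕜 := 𝕜) hp hσ (lp.single p u a) = lp.single p (σ u) a := by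
  ext1
  exact extend_pi_single hσ u a

end lp

theorem lp.mapCLM_single {𝕜 ι : Type*} {E F : ι → Type*} [NontriviallyNormedField 𝕜]
    [∀ i, NormedAddCommGroup (E i)] [∀ i, NormedSpace 𝕜 (E i)]
    [∀ i, NormedAddCommGroup (F i)] [∀ i, NormedSpace 𝕜 (F i)] {p : ENNReal} [Fact (1 ≤ p)]
    [DecidableEq ι] (S : ∀ i, E i →L[𝕜] F i) {K : ℝ} (hK : 0 ≤ K) (hSK : ∀ i, ‖S i‖ ≤ K)
    (u : ι) (a : E u) : mapCLM p S hK hSK (lp.single p u a) = lp.single p u (S u a) := by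
  ext v
  by_cases hv : v = u
  · subst hv; simp
  · simp [lp.single_apply, Pi.single_eq_of_ne hv]

section Hilbert

variable {𝕜 E : Type*} [RCLike 𝕜] [NormedAddCommGroup E] [InnerProductSpace 𝕜 E]

namespace ContinuousLinearMapWOT

def invtSubalgebra (K : Submodule 𝕜 E) : Subalgebra 𝕜 (E →WOT[𝕜] E) where
  carrier := {B | ∀ y ∈ K, B y ∈ K}
  mul_mem' hA hB y hy := hA _ (hB y hy)
  add_mem' hA hB y hy := K.add_mem (hA y hy) (hB y hy)
  algebraMap_mem' c _ hy := K.smul_mem c hy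

theorem mem_invtSubalgebra {K : Submodule 𝕜 E} {B : E →WOT[𝕜] E} :
    B ∈ invtSubalgebra K ↔ ∀ y ∈ K, B y ∈ K := Iff.rfl

theorem isClosed_invtSubalgebra (K : Submodule 𝕜 E) [K.HasOrthogonalProjection] :
    IsClosed (invtSubalgebra K : Set (E →WOT[𝕜] E)) := by
  have : (invtSubalgebra K : Set (E →WOT[𝕜] E)) =
      ⋂ y ∈ K, ⋂ z ∈ Kᗮ, {B | inner 𝕜 z (B y) = 0} := by
    ext B
    simp only [SetLike.mem_coe, mem_invtSubalgebra, Set.mem_iInter, Set.mem_ofPred_eq]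
    refine forall₂_congr fun y _ => ?_
    conv_lhs => rw [← K.orthogonal_orthogonal]
    exact Submodule.mem_orthogonal _ _
  rw [this]
  exact isClosed_biInter fun y _ => isClosed_biInter fun z _ =>
    isClosed_eq (continuous_dual_apply y (innerSL 𝕜 z)) continuous_const

end ContinuousLinearMapWOT

variable [CompleteSpace E]

open ContinuousLinearMap Module.End

theorem exists_adjoint_apply_eq_smul {A : E →L[𝕜] E} {x : E}
    (hA : ∀ y ∈ (𝕜 ∙ x)ᗮ, A y ∈ (𝕜 ∙ x)ᗮ) : ∃ d : 𝕜, adjoint A x = d • x := by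
  have hinv : (𝕜 ∙ x) ∈ invtSubmodule (adjoint A).toLinearMap :=
    ContinuousLinearMap.mem_invtSubmodule_adjoint_iff.2
      ((mem_invtSubmodule_iff_forall_mem_of_mem _).2 hA)
  obtain ⟨d, hd⟩ := Submodule.mem_span_singleton.1
    ((mem_invtSubmodule_iff_forall_mem_of_mem _).1 hinv x (Submodule.mem_span_singleton_self x))
  exact ⟨d, hd.symm⟩

theorem IsStarNormal.apply_eq_star_smul_of_adjoint_apply_eq {A : E →L[𝕜] E}
    (hA : IsStarNormal A) {x : E} {d : 𝕜} (h : adjoint A x = d • x) : A x = star d • x := by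
  set B := A - star d • (1 : E →L[𝕜] E)
  have hstar : star B = star A - d • 1 := by simp [B, star_sub, star_smul]
  have hB : IsStarNormal B := ⟨by
    rw [hstar]
    exact (hA.star_comm_self.sub_right ((Commute.one_right _).smul_right _)).sub_left
      ((Commute.one_left _).smul_left _)⟩
  have hBx : adjoint B x = 0 := by rw [← star_eq_adjoint, hstar]; simp [star_eq_adjoint, h]
  rw [hB.adjoint_apply_eq_zero_iff] at hBx
  simpa [B, sub_eq_zero] using hBx

end Hilbert

open ContinuousLinearMapWOT in
theorem ofCLM_mem_of_mem_wotAlg {n : ℕ} {T : Fin n → (Hn n →L[ℂ] Hn n)} {A : Hn n →L[ℂ] Hn n}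
    (hA : A ∈ wotAlg T) {S : Subalgebra ℂ (Hn n →WOT[ℂ] Hn n)}
    (hS : IsClosed (S : Set (Hn n →WOT[ℂ] Hn n))) (hTS : ∀ i, ofCLM (T i) ∈ S) : ofCLM A ∈ S := by
  refine closure_minimal (Set.image_subset_iff.2 ?_) hS hA
  exact Algebra.adjoin_le (S := S.comap (algEquiv ℂ).symm.toAlgHom) (Set.range_subset_iff.2 hTS)

namespace Hn

variable {n : ℕ}

theorem ext_xi {F : Type*} [AddCommMonoid F] [Module ℂ F] [TopologicalSpace F] [T2Space F]
    {f g : Hn n →L[ℂ] F} (h : ∀ w, f (xi w) = g (xi w)) : f = g := by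
  refine lp.ext_continuousLinearMap ENNReal.ofNat_ne_top fun w =>
    ContinuousLinearMap.ext fun a => ?_
  have ha : lp.single 2 w a = a • xi w := by rw [xi, ← lp.single_smul, smul_eq_mul, mul_one]
  simp [ha, h]

theorem inner_xi_xi_of_ne {u v : FreeMonoid (Fin n)} (h : u ≠ v) :
    inner ℂ (xi u) (xi v) = 0 := by
  rw [xi, lp.inner_single_left, xi, lp.single_apply, Pi.single_eq_of_ne h, inner_zero_right]

end Hn

section Weights

variable {n : ℕ} {lam : Fin n → FreeMonoid (Fin n) → ℝ}

theorem Waux_pos (hpos : ∀ i w, 0 < lam i w) (u : FreeMonoid (Fin n)) :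
    ∀ l : List (Fin n), 0 < Waux lam u l
  | [] => one_pos
  | i :: l => mul_pos (hpos i _) (Waux_pos hpos u l)

theorem Wfun_pos (hpos : ∀ i w, 0 < lam i w) (u w : FreeMonoid (Fin n)) : 0 < Wfun lam u w :=
  Waux_pos hpos u _

theorem Wfun_of_mul (u : FreeMonoid (Fin n)) (j : Fin n) (w : FreeMonoid (Fin n)) :
    Wfun lam u (FreeMonoid.of j * w) = lam j (w * u) * Wfun lam u w := by
  simp only [Wfun, FreeMonoid.toList_of_mul, Waux, FreeMonoid.ofList_toList]

def rightWeight (lam : Fin n → FreeMonoid (Fin n) → ℝ) (i : Fin n) (w : FreeMonoid (Fin n)) : ℝ :=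
  Wfun lam (FreeMonoid.of i) w * (Wfun lam 1 w)⁻¹

theorem rightWeight_pos (hpos : ∀ i w, 0 < lam i w) (i : Fin n) (w : FreeMonoid (Fin n)) :
    0 < rightWeight lam i w :=
  mul_pos (Wfun_pos hpos _ _) (inv_pos.2 (Wfun_pos hpos _ _))

theorem rightWeight_mul_lam (hpos : ∀ i w, 0 < lam i w) (i j : Fin n) (w : FreeMonoid (Fin n)) :
    rightWeight lam i w * lam j (w * FreeMonoid.of i) =
      lam j w * rightWeight lam i (FreeMonoid.of j * w) := by
  have h1 := (Wfun_pos hpos 1 w).ne'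
  have h2 := (hpos j w).ne'
  rw [rightWeight, rightWeight, Wfun_of_mul, Wfun_of_mul, mul_one]
  field_simp

end Weights

section RightShift

open ContinuousLinearMap

variable {n : ℕ} {lam : Fin n → FreeMonoid (Fin n) → ℝ} {C : ℝ}

def rightShift (hpos : ∀ i w, 0 < lam i w) (hC : ∀ i w, rightWeight lam i w ≤ C) (i : Fin n) :
    Hn n →L[ℂ] Hn n :=
  have hC0 : 0 ≤ C := (rightWeight_pos hpos i 1).le.trans (hC i 1)
  (lp.extendZeroₗᵢ (p := 2) ENNReal.ofNat_ne_top
      (mul_left_injective (FreeMonoid.of i))).toContinuousLinearMap.comp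
    (lp.mapCLM 2 (fun w => (rightWeight lam i w : ℂ) • ContinuousLinearMap.id ℂ ℂ) hC0 fun w => by
      simpa [norm_smul, abs_of_pos (rightWeight_pos hpos i w)] using hC i w)

variable (hpos : ∀ i w, 0 < lam i w) (hC : ∀ i w, rightWeight lam i w ≤ C)

theorem rightShift_xi (i : Fin n) (w : FreeMonoid (Fin n)) :
    rightShift hpos hC i (xi w) = (rightWeight lam i w : ℂ) • xi (w * FreeMonoid.of i) := by
  rw [rightShift, ContinuousLinearMap.comp_apply, xi, lp.mapCLM_single]
  simp only [LinearIsometry.coe_toContinuousLinearMap, lp.extendZeroₗᵢ_single, smul_apply,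
    id_apply, xi]
  rw [← lp.single_smul, smul_eq_mul, mul_one]

theorem apply_xi_eq_smul_of_commute {A : Hn n →L[ℂ] Hn n} {c : ℂ}
    (hA : ∀ i, Commute A (rightShift hpos hC i)) (h1 : A (xi 1) = c • xi 1)
    (w : FreeMonoid (Fin n)) : A (xi w) = c • xi w := by
  suffices ∀ u, A (xi u) = c • xi u → A (xi (u * w)) = c • xi (u * w) by
    simpa using this 1 h1
  induction w using FreeMonoid.inductionOn with
  | one => simp
  | of i =>
    intro u hu
    have hμ : (rightWeight lam i u : ℂ) ≠ 0 := by exact_mod_cast (rightWeight_pos hpos i u).ne'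
    have hxi : xi (u * .of i) = (rightWeight lam i u : ℂ)⁻¹ • rightShift hpos hC i (xi u) := by
      rw [rightShift_xi, smul_smul, inv_mul_cancel₀ hμ, one_smul]
    have hcomm : A (rightShift hpos hC i (xi u)) = rightShift hpos hC i (A (xi u)) :=
      congr($(hA i) (xi u))
    rw [hxi, map_smul, hcomm, hu, map_smul, smul_comm]
  | mul x y ihx ihy =>
    intro u hu
    rw [← mul_assoc]
    exact ihy _ (ihx u hu)

variable {T : Fin n → (Hn n →L[ℂ] Hn n)}
  (hT : ∀ i w, T i (xi w) = (lam i w : ℂ) • xi (FreeMonoid.of i * w))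
include hT

theorem commute_rightShift (j i : Fin n) : Commute (T j) (rightShift hpos hC i) := by
  refine Hn.ext_xi fun w => ?_
  simp only [mul_apply_eq_comp, rightShift_xi, hT, map_smul, smul_smul]
  rw [mul_assoc]
  norm_cast
  rw [rightWeight_mul_lam hpos]

theorem apply_mem_orthogonal_xi_one (i : Fin n) (y : Hn n) : T i y ∈ (ℂ ∙ xi 1)ᗮ := by
  rw [Submodule.mem_orthogonal_singleton_iff_inner_right]
  have : (innerSL ℂ (xi 1)).comp (T i) = 0 := Hn.ext_xi fun w => by
    simp [hT, Hn.inner_xi_xi_of_ne (FreeMonoid.of_mul_ne_one i w).symm]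
  exact congr($this y)

end RightShift

open ContinuousLinearMap ContinuousLinearMapWOT in
theorem LLambda_normal_is_scalar_general (n : ℕ)
    (lam : Fin n → FreeMonoid (Fin n) → ℝ)
    (hpos : ∀ i w, 0 < lam i w)
    (h6 : ∃ C : ℝ, ∀ i w, Wfun lam (FreeMonoid.of i) w * (Wfun lam 1 w)⁻¹ ≤ C)
    (T : Fin n → (Hn n →L[ℂ] Hn n))
    (hT : ∀ i w, T i (xi w) = (lam i w : ℂ) • xi (FreeMonoid.of i * w))
    (A : Hn n →L[ℂ] Hn n) (hA : A ∈ wotAlg T)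
    (hnormal : ContinuousLinearMap.adjoint A * A = A * ContinuousLinearMap.adjoint A) :
    ∃ c : ℂ, A = c • (1 : Hn n →L[ℂ] Hn n) := by
  obtain ⟨C, hC⟩ := h6
  have hcomm : ∀ i, Commute A (rightShift hpos hC i) := by
    have hA' := ofCLM_mem_of_mem_wotAlg hA (Set.isClosed_centralizer _)
      (S := Subalgebra.centralizer ℂ (Set.range fun i => ofCLM (rightShift hpos hC i)))
      fun j => by
        rintro _ ⟨i, rfl⟩
        exact congrArg ofCLM (commute_rightShift hpos hC hT j i).symm.eq
    exact fun i => congrArg toCLM (hA' _ ⟨i, rfl⟩).symm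
  have hinv : ∀ y ∈ (ℂ ∙ xi 1)ᗮ, A y ∈ (ℂ ∙ xi 1)ᗮ :=
    ofCLM_mem_of_mem_wotAlg hA (isClosed_invtSubalgebra _)
      fun i y _ => apply_mem_orthogonal_xi_one hT i y
  obtain ⟨d, hd⟩ := exists_adjoint_apply_eq_smul hinv
  have hvac := IsStarNormal.apply_eq_star_smul_of_adjoint_apply_eq
    ⟨by rw [star_eq_adjoint]; exact hnormal⟩ hd
  exact ⟨star d, Hn.ext_xi fun w => by
    simpa using apply_xi_eq_smul_of_commute hpos hC hcomm hvac w⟩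

/-- Assume condition (6) holds. Then the only normal elements of `𝔏_Λ`
are the scalar multiples of the identity. -/
theorem LLambda_normal_is_scalar (n : ℕ) (hn : 2 ≤ n)
    (lam : Fin n → FreeMonoid (Fin n) → ℝ)
    (hpos : ∀ i w, 0 < lam i w) (hbdd : ∃ C : ℝ, ∀ i w, lam i w ≤ C)
    (h6 : ∃ C : ℝ, ∀ i w, Wfun lam (FreeMonoid.of i) w * (Wfun lam 1 w)⁻¹ ≤ C)
    (T : Fin n → (Hn n →L[ℂ] Hn n))
    (hT : ∀ i w, T i (xi w) = (lam i w : ℂ) • xi (FreeMonoid.of i * w))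
    (A : Hn n →L[ℂ] Hn n) (hA : A ∈ wotAlg T)
    (hnormal : ContinuousLinearMap.adjoint A * A = A * ContinuousLinearMap.adjoint A) :
    ∃ c : ℂ, A = c • (1 : Hn n →L[ℂ] Hn n) :=
  LLambda_normal_is_scalar_general n lam hpos h6 T hT A hA hnormal
end
end

section
/- The eigenvalue set for the adjoint tuple is hereditary: if μ = (μ_1,…,μ_n) ∈ ℂ^n is an eigenvalue for the adjoint tuple, then every λ = (λ_1,…,λ_n) ∈ ℂ^n with |λ_i| ≤ |μ_i| for all 1 ≤ i ≤ n is also an eigenvalue for the adjoint tuple. -/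
noncomputable section

/-!
A vector `ξ` satisfies `T_i^* ξ = conj(λ_i) ξ` for all `i` exactly when its coefficients obey
`λ_{i,w} ξ(iw) = conj(λ_i) ξ(w)`, so `ξ` is determined by `ξ(e)`: it is `ξ(e)` times the explicit
function `eigenCoeff`, a product of the factors `conj(λ_i) / λ_{i,w}` along the word. Hence `λ` is an
eigenvalue iff `eigenCoeff λ` is square summable, and shrinking every `|λ_i|` shrinks every
coefficient in modulus.
-/

open ComplexConjugate ContinuousLinearMap

namespace WeightedShift

variable {n : ℕ}

lemma inner_xi_left (f : Hn n) (w : FreeMonoid (Fin n)) : inner ℂ (xi w) f = f w := by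
  simp [xi, lp.inner_single_left, RCLike.inner_apply]

lemma adjoint_apply_of_apply_xi {S : Hn n →L[ℂ] Hn n} {c : FreeMonoid (Fin n) → ℂ}
    {s : FreeMonoid (Fin n) → FreeMonoid (Fin n)} (hS : ∀ w, S (xi w) = c w • xi (s w))
    (f : Hn n) (w : FreeMonoid (Fin n)) : adjoint S f w = conj (c w) * f (s w) := by
  rw [← inner_xi_left, adjoint_inner_right, hS, inner_smul_left, inner_xi_left]

variable (lam : Fin n → FreeMonoid (Fin n) → ℝ)

def eigenCoeff (l : Fin n → ℂ) (w : FreeMonoid (Fin n)) : ℂ :=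
  FreeMonoid.recOn w 1 fun i w c => conj (l i) / lam i w * c

@[simp]
lemma eigenCoeff_one (l : Fin n → ℂ) : eigenCoeff lam l 1 = 1 := rfl

lemma eigenCoeff_of_mul (l : Fin n → ℂ) (i : Fin n) (w : FreeMonoid (Fin n)) :
    eigenCoeff lam l (FreeMonoid.of i * w) = conj (l i) / lam i w * eigenCoeff lam l w :=
  rfl

lemma norm_eigenCoeff_le {l m : Fin n → ℂ} (hl : ∀ i, ‖l i‖ ≤ ‖m i‖) (w : FreeMonoid (Fin n)) :
    ‖eigenCoeff lam l w‖ ≤ ‖eigenCoeff lam m w‖ := by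
  induction w using FreeMonoid.recOn with
  | one => rfl
  | of_mul i w ih =>
    simp only [eigenCoeff_of_mul, norm_mul, norm_div, Complex.norm_conj]
    gcongr
    exact hl i

variable {lam}

lemma mul_eigenCoeff_of_mul (hlam : ∀ i w, lam i w ≠ 0) (l : Fin n → ℂ) (i : Fin n)
    (w : FreeMonoid (Fin n)) :
    lam i w * eigenCoeff lam l (FreeMonoid.of i * w) = conj (l i) * eigenCoeff lam l w := by
  have : (lam i w : ℂ) ≠ 0 := mod_cast hlam i w
  rw [eigenCoeff_of_mul]
  field_simp

lemma eq_mul_eigenCoeff (hlam : ∀ i w, lam i w ≠ 0) {l : Fin n → ℂ} {f : FreeMonoid (Fin n) → ℂ}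
    (hf : ∀ i w, lam i w * f (FreeMonoid.of i * w) = conj (l i) * f w) (w : FreeMonoid (Fin n)) :
    f w = f 1 * eigenCoeff lam l w := by
  induction w using FreeMonoid.recOn with
  | one => simp
  | of_mul i w ih =>
    have : (lam i w : ℂ) ≠ 0 := mod_cast hlam i w
    have hstep : f (FreeMonoid.of i * w) = conj (l i) * f w / lam i w := by
      rw [eq_div_iff this, mul_comm, hf]
    rw [hstep, ih, eigenCoeff_of_mul]
    ring

variable {T : Fin n → (Hn n →L[ℂ] Hn n)}

lemma adjoint_eq_smul_iff (hT : ∀ i w, T i (xi w) = (lam i w : ℂ) • xi (FreeMonoid.of i * w))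
    {l : Fin n → ℂ} {f : Hn n} :
    (∀ i, adjoint (T i) f = conj (l i) • f) ↔
      ∀ i w, lam i w * f (FreeMonoid.of i * w) = conj (l i) * f w := by
  simp only [lp.ext_iff, funext_iff, lp.coeFn_smul, Pi.smul_apply, smul_eq_mul,
    adjoint_apply_of_apply_xi (hT _), Complex.conj_ofReal]

theorem exists_adjoint_eigenvector_iff (hlam : ∀ i w, lam i w ≠ 0)
    (hT : ∀ i w, T i (xi w) = (lam i w : ℂ) • xi (FreeMonoid.of i * w)) (l : Fin n → ℂ) :
    (∃ ξ : Hn n, ξ ≠ 0 ∧ ∀ i, adjoint (T i) ξ = conj (l i) • ξ) ↔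
      Memℓp (eigenCoeff lam l) 2 := by
  constructor
  · rintro ⟨ξ, hξ, heig⟩
    have hcoeff := eq_mul_eigenCoeff hlam ((adjoint_eq_smul_iff hT).1 heig)
    have hbase : ξ 1 ≠ 0 := fun h ↦
      hξ (lp.ext (funext fun w ↦ by rw [hcoeff, h, zero_mul]; rfl))
    have : eigenCoeff lam l = (ξ 1)⁻¹ • ⇑ξ := by
      ext w
      rw [Pi.smul_apply, smul_eq_mul, hcoeff w, inv_mul_cancel_left₀ hbase]
    exact this ▸ (lp.memℓp ξ).const_smul _
  · intro h
    refine ⟨⟨eigenCoeff lam l, h⟩, fun h0 ↦ ?_,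
      (adjoint_eq_smul_iff hT).2 (mul_eigenCoeff_of_mul hlam l)⟩
    simpa using congrArg (fun f : Hn n ↦ f 1) h0

end WeightedShift

theorem eigenvalues_hereditary_general (n : ℕ)
    (lam : Fin n → FreeMonoid (Fin n) → ℝ)
    (hpos : ∀ i w, 0 < lam i w)
    (T : Fin n → (Hn n →L[ℂ] Hn n))
    (hT : ∀ i w, T i (xi w) = (lam i w : ℂ) • xi (FreeMonoid.of i * w))
    (m : Fin n → ℂ)
    (hm : ∃ ξ : Hn n, ξ ≠ 0 ∧
      ∀ i, ContinuousLinearMap.adjoint (T i) ξ = (starRingEnd ℂ) (m i) • ξ)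
    (l : Fin n → ℂ) (hl : ∀ i, ‖l i‖ ≤ ‖m i‖) :
    ∃ ξ : Hn n, ξ ≠ 0 ∧
      ∀ i, ContinuousLinearMap.adjoint (T i) ξ = (starRingEnd ℂ) (l i) • ξ := by
  have hlam : ∀ i w, lam i w ≠ 0 := fun i w ↦ (hpos i w).ne'
  rw [WeightedShift.exists_adjoint_eigenvector_iff hlam hT] at hm ⊢
  exact hm.mono' (WeightedShift.norm_eigenCoeff_le lam hl)

/-- The eigenvalue set for the adjoint tuple is hereditary: if `μ` is an
eigenvalue for the adjoint tuple, then so is every `λ` with `|λ_i| ≤ |μ_i|` for all `i`. -/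
theorem eigenvalues_hereditary (n : ℕ) (hn : 2 ≤ n)
    (lam : Fin n → FreeMonoid (Fin n) → ℝ)
    (hpos : ∀ i w, 0 < lam i w) (hbdd : ∃ C : ℝ, ∀ i w, lam i w ≤ C)
    (T : Fin n → (Hn n →L[ℂ] Hn n))
    (hT : ∀ i w, T i (xi w) = (lam i w : ℂ) • xi (FreeMonoid.of i * w))
    (m : Fin n → ℂ)
    (hm : ∃ ξ : Hn n, ξ ≠ 0 ∧
      ∀ i, ContinuousLinearMap.adjoint (T i) ξ = (starRingEnd ℂ) (m i) • ξ)
    (l : Fin n → ℂ) (hl : ∀ i, ‖l i‖ ≤ ‖m i‖) :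
    ∃ ξ : Hn n, ξ ≠ 0 ∧
      ∀ i, ContinuousLinearMap.adjoint (T i) ξ = (starRingEnd ℂ) (l i) • ξ :=
  eigenvalues_hereditary_general n lam hpos T hT m hm l hl
end
end
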